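/- Suppose the loss is self-bounded (|f'(u)| ≤ f(u)) and the gradient-descent iterates satisfy the descent condition F̂(w_{t+1}) ≤ F̂(w_t) − (η/2)‖∇F̂(w_t)‖² for all t ≥ 0. Then for every w ∈ ℝ^{md} and every T ≥ 1, with w_{αt} := αw_t + (1−α)w, (1/T)·Σ_{t=1}^T F̂(w_t) ≤ F̂(w) + ‖w − w_0‖²/(ηT) + (LR²/(2√m))·(1/T)·Σ_{t=0}^{T−1} (max_{α∈[0,1]} F̂(w_{αt}))·‖w − w_t‖². -/

import Mathlib

open scoped BigOperators

/-- Two-layer network `Φ(w,x) = (1/√m) ∑_j a_j σ(⟨w_j, x⟩)`. -/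
noncomputable def Phi {m d : ℕ} (a : Fin m → ℝ) (σ : ℝ → ℝ)
    (w : EuclideanSpace ℝ (Fin m × Fin d)) (x : EuclideanSpace ℝ (Fin d)) : ℝ :=
  (1 / Real.sqrt m) * ∑ j : Fin m, a j * σ (∑ i : Fin d, w (j, i) * x i)

/-- Empirical loss `F̂(w) = (1/n) ∑_i f(y_i Φ(w, x_i))`. -/
noncomputable def empLoss {m d n : ℕ} (a : Fin m → ℝ) (σ f : ℝ → ℝ)
    (x : Fin n → EuclideanSpace ℝ (Fin d)) (y : Fin n → ℝ)
    (w : EuclideanSpace ℝ (Fin m × Fin d)) : ℝ :=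
  (1 / (n : ℝ)) * ∑ i : Fin n, f (y i * Phi a σ w (x i))

/-!
Along the segment from `v` to `v + h`, each margin `yᵢ Φ(·, xᵢ)` has second derivative at most
`L R² ‖h‖² / √m`. Taylor's theorem together with the tangent-line inequality for the convex loss
and `|f'| ≤ f` gives the weak-convexity estimate
`⟪∇F̂(v), h⟫ ≤ F̂(v + h) - F̂(v) + (L R² / (2√m)) ‖h‖² F̂(v)`.
Taking `v = w_t`, `h = w - w_t` and bounding `F̂(w_t)` by its maximum on the segment, the usual
online-gradient argument applies: expanding `‖w_{t+1} - w‖²`, the descent condition absorbs the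
term `η² ‖∇F̂(w_t)‖²`, and the distances telescope.
-/

open Set Finset

lemma ConvexOn.add_mul_sub_le_of_hasDerivAt {S : Set ℝ} {f : ℝ → ℝ} {f' u v : ℝ}
    (hfc : ConvexOn ℝ S f) (hu : u ∈ S) (hv : v ∈ S) (hf : HasDerivAt f f' u) :
    f u + f' * (v - u) ≤ f v := by
  rcases lt_trichotomy u v with huv | rfl | hvu
  · have := hfc.le_slope_of_hasDerivAt hu hv huv hf
    rw [slope_def_field, le_div_iff₀ (sub_pos.2 huv)] at this
    linarith
  · simp
  · have := hfc.slope_le_of_hasDerivAt hv hu hvu hf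
    rw [slope_def_field, div_le_iff₀ (sub_pos.2 hvu)] at this
    linarith

lemma add_deriv_mul_sub_le_of_le_deriv2 {G G' G'' : ℝ → ℝ} {K a b : ℝ} (hab : a ≤ b)
    (hG : ∀ t, HasDerivAt G (G' t) t) (hG' : ∀ t, HasDerivAt G' (G'' t) t)
    (hK : ∀ t ∈ Icc a b, -K ≤ G'' t) :
    G a + G' a * (b - a) - K / 2 * (b - a) ^ 2 ≤ G b := by
  -- `G + K (t - a)² / 2` is convex on `[a, b]`, so it lies above its tangent at `a`.
  have hχ : ∀ t, HasDerivAt (fun s => G s + K / 2 * (s - a) ^ 2) (G' t + K * (t - a)) t := by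
    intro t
    refine ((hG t).fun_add ((((hasDerivAt_id' t).sub_const a).pow 2).const_mul (K / 2))).congr_deriv
      (by norm_num; ring)
  have hχ' : ∀ t, HasDerivAt (fun s => G' s + K * (s - a)) (G'' t + K) t := by
    intro t
    simpa using (hG' t).fun_add (((hasDerivAt_id' t).sub_const a).const_mul K)
  have hconv : ConvexOn ℝ (Icc a b) (fun s => G s + K / 2 * (s - a) ^ 2) :=
    convexOn_of_hasDerivWithinAt2_nonneg (convex_Icc a b)
      (fun t _ => (hχ t).continuousAt.continuousWithinAt)
      (fun t _ => (hχ t).hasDerivWithinAt) (fun t _ => (hχ' t).hasDerivWithinAt)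
      (fun t ht => by linarith [hK t (interior_subset ht)])
  have := hconv.add_mul_sub_le_of_hasDerivAt (left_mem_Icc.2 hab) (right_mem_Icc.2 hab) (hχ a)
  simp only [sub_self] at this
  linarith

lemma abs_sub_sub_deriv_mul_le {G G' G'' : ℝ → ℝ} {K a b : ℝ} (hab : a ≤ b)
    (hG : ∀ t, HasDerivAt G (G' t) t) (hG' : ∀ t, HasDerivAt G' (G'' t) t)
    (hK : ∀ t ∈ Icc a b, |G'' t| ≤ K) :
    |G b - G a - G' a * (b - a)| ≤ K / 2 * (b - a) ^ 2 := by
  have lower := add_deriv_mul_sub_le_of_le_deriv2 hab hG hG' fun t ht => (abs_le.1 (hK t ht)).1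
  have upper := add_deriv_mul_sub_le_of_le_deriv2 (G := fun t => -G t) (G' := fun t => -G' t)
    hab (fun t => (hG t).neg) (fun t => (hG' t).neg) fun t ht => by
      simpa using (abs_le.1 (hK t ht)).2
  rw [abs_le]
  constructor <;> linarith

lemma ConvexOn.deriv_mul_le_of_abs_deriv_le_self {f : ℝ → ℝ} (hfc : ConvexOn ℝ univ f)
    (hfd : Differentiable ℝ f) (hfself : ∀ u, |deriv f u| ≤ f u) (u v p : ℝ) :
    deriv f u * p ≤ f v - f u + f u * |v - u - p| := by
  have tangent := hfc.add_mul_sub_le_of_hasDerivAt (mem_univ u) (mem_univ v) (hfd u).hasDerivAt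
  have error : -(deriv f u * (v - u - p)) ≤ f u * |v - u - p| :=
    (neg_le_abs _).trans <| (abs_mul _ _).trans_le <|
      mul_le_mul_of_nonneg_right (hfself u) (abs_nonneg _)
  linarith

lemma hasDerivAt_sum_mul_comp_add_mul {ι : Type*} (s : Finset ι) (b z u : ι → ℝ)
    {g g' : ℝ → ℝ} (hg : ∀ t, HasDerivAt g (g' t) t) (α : ℝ) :
    HasDerivAt (fun β => ∑ j ∈ s, b j * g (z j + β * u j))
      (∑ j ∈ s, b j * u j * g' (z j + α * u j)) α := by
  refine HasDerivAt.fun_sum fun j _ => ?_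
  have hlin : HasDerivAt (fun β => z j + β * u j) (u j) α := by
    simpa using ((hasDerivAt_id α).mul_const (u j)).const_add (z j)
  exact (((hg _).comp α hlin).const_mul (b j)).congr_deriv (by ring)

lemma le_iSup_segment {E : Type*} [NormedAddCommGroup E] [NormedSpace ℝ E] {F : E → ℝ}
    (hF : Continuous F) (v w : E) :
    F v ≤ ⨆ α : Icc (0 : ℝ) 1, F ((α : ℝ) • v + (1 - (α : ℝ)) • w) := by
  have hbdd := isCompact_range (X := Icc (0 : ℝ) 1)
    (f := fun α => F ((α : ℝ) • v + (1 - (α : ℝ)) • w)) (by fun_prop)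
  simpa using le_ciSup hbdd.bddAbove ⟨1, right_mem_Icc.2 zero_le_one⟩

section Network

variable {m d : ℕ}

def preact (w : EuclideanSpace ℝ (Fin m × Fin d)) (x : EuclideanSpace ℝ (Fin d)) (j : Fin m) :
    ℝ :=
  ∑ k : Fin d, w (j, k) * x k

lemma preact_add_smul (v h : EuclideanSpace ℝ (Fin m × Fin d)) (β : ℝ)
    (x : EuclideanSpace ℝ (Fin d)) (j : Fin m) :
    preact (v + β • h) x j = preact v x j + β * preact h x j := by
  simp only [preact, PiLp.add_apply, PiLp.smul_apply, smul_eq_mul, mul_sum, ← sum_add_distrib]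
  exact sum_congr rfl fun k _ => by ring

lemma sum_preact_sq_le (h : EuclideanSpace ℝ (Fin m × Fin d)) (x : EuclideanSpace ℝ (Fin d)) :
    ∑ j, preact h x j ^ 2 ≤ ‖h‖ ^ 2 * ‖x‖ ^ 2 :=
  calc ∑ j, preact h x j ^ 2 ≤ ∑ j, (∑ k, h (j, k) ^ 2) * ∑ k, x k ^ 2 :=
        sum_le_sum fun j _ => sum_mul_sq_le_sq_mul_sq _ _ _
    _ = ‖h‖ ^ 2 * ‖x‖ ^ 2 := by
        simp only [← sum_mul, EuclideanSpace.norm_sq_eq, Fintype.sum_prod_type, Real.norm_eq_abs,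
          sq_abs]

lemma Phi_add_smul (a : Fin m → ℝ) (σ : ℝ → ℝ) (v h : EuclideanSpace ℝ (Fin m × Fin d))
    (x : EuclideanSpace ℝ (Fin d)) (β : ℝ) :
    Phi a σ (v + β • h) x =
      ∑ j, a j / Real.sqrt m * σ (preact v x j + β * preact h x j) := by
  rw [Phi, mul_sum]
  exact sum_congr rfl fun j _ => by rw [← preact, preact_add_smul]; ring

lemma abs_Phi_add_sub_sub_deriv_le {a : Fin m → ℝ} (ha : ∀ j, |a j| ≤ 1) {σ : ℝ → ℝ} {L : ℝ}
    (hσ : Differentiable ℝ σ) (hσ' : Differentiable ℝ (deriv σ))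
    (hσ'' : ∀ u, |deriv (deriv σ) u| ≤ L) (v h : EuclideanSpace ℝ (Fin m × Fin d))
    (x : EuclideanSpace ℝ (Fin d)) :
    |Phi a σ (v + h) x - Phi a σ v x - deriv (fun β : ℝ => Phi a σ (v + β • h) x) 0|
      ≤ L * ‖x‖ ^ 2 / (2 * Real.sqrt m) * ‖h‖ ^ 2 := by
  set b : Fin m → ℝ := fun j => a j / Real.sqrt m
  set z := preact v x
  set u := preact h x
  have hline : (fun β : ℝ => Phi a σ (v + β • h) x) = fun β => ∑ j, b j * σ (z j + β * u j) :=
    funext (Phi_add_smul a σ v h x)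
  have hG := hasDerivAt_sum_mul_comp_add_mul univ b z u fun t => (hσ t).hasDerivAt
  have hG' := hasDerivAt_sum_mul_comp_add_mul univ (fun j => b j * u j) z u
    fun t => (hσ' t).hasDerivAt
  have hb : ∀ j, |b j| ≤ 1 / Real.sqrt m := fun j => by
    rw [abs_div, abs_of_nonneg (Real.sqrt_nonneg _)]
    exact div_le_div_of_nonneg_right (ha j) (Real.sqrt_nonneg _)
  have hbound : ∀ t, |∑ j, b j * u j * u j * deriv (deriv σ) (z j + t * u j)|
      ≤ L * ‖x‖ ^ 2 / Real.sqrt m * ‖h‖ ^ 2 := fun t =>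
    calc _ ≤ ∑ j, |b j * u j * u j * deriv (deriv σ) (z j + t * u j)| := abs_sum_le_sum_abs _ _
      _ ≤ ∑ j, L / Real.sqrt m * u j ^ 2 := sum_le_sum fun j _ =>
          calc _ = |b j| * u j ^ 2 * |deriv (deriv σ) (z j + t * u j)| := by
                rw [abs_mul, abs_mul, abs_mul, mul_assoc |b j|, abs_mul_abs_self]; ring
            _ ≤ 1 / Real.sqrt m * u j ^ 2 * L := by gcongr; exacts [hb j, hσ'' _]
            _ = _ := by ring
      _ ≤ L / Real.sqrt m * (‖h‖ ^ 2 * ‖x‖ ^ 2) := by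
          rw [← mul_sum]
          exact mul_le_mul_of_nonneg_left (sum_preact_sq_le h x)
            (div_nonneg ((abs_nonneg _).trans (hσ'' 0)) (Real.sqrt_nonneg _))
      _ = _ := by ring
  have taylor := abs_sub_sub_deriv_mul_le zero_le_one hG hG' fun t _ => hbound t
  have h1 : Phi a σ (v + h) x = ∑ j, b j * σ (z j + 1 * u j) := by
    simpa using Phi_add_smul a σ v h x 1
  have h0 : Phi a σ v x = ∑ j, b j * σ (z j + 0 * u j) := by
    simpa using Phi_add_smul a σ v h x 0
  rw [hline, (hG 0).deriv, h1, h0]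
  convert taylor using 1
  · simp
  · ring

end Network

section Loss

variable {m d n : ℕ} {a : Fin m → ℝ} {σ f : ℝ → ℝ} {x : Fin n → EuclideanSpace ℝ (Fin d)}
  {y : Fin n → ℝ}

lemma differentiable_empLoss (hσ : Differentiable ℝ σ) (hf : Differentiable ℝ f) :
    Differentiable ℝ (empLoss a σ f x y) := by
  unfold empLoss Phi
  fun_prop

lemma empLoss_nonneg (hf : ∀ u, 0 ≤ f u) (w : EuclideanSpace ℝ (Fin m × Fin d)) :
    0 ≤ empLoss a σ f x y w :=
  mul_nonneg (by positivity) (sum_nonneg fun i _ => hf _)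

-- Self-boundedness charges the curvature of the network to the loss itself.
lemma inner_gradient_empLoss_le {L R : ℝ} (ha : ∀ j, |a j| ≤ 1) (hσ : Differentiable ℝ σ)
    (hσ' : Differentiable ℝ (deriv σ)) (hσ'' : ∀ u, |deriv (deriv σ) u| ≤ L)
    (hfc : ConvexOn ℝ univ f) (hfd : Differentiable ℝ f) (hfself : ∀ u, |deriv f u| ≤ f u)
    (hx : ∀ i, ‖x i‖ ≤ R) (hy : ∀ i, |y i| ≤ 1) (v w : EuclideanSpace ℝ (Fin m × Fin d)) :
    inner ℝ (gradient (empLoss a σ f x y) v) (w - v) ≤ empLoss a σ f x y w - empLoss a σ f x y v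
      + L * R ^ 2 / (2 * Real.sqrt m) * ‖w - v‖ ^ 2 * empLoss a σ f x y v := by
  obtain ⟨h, rfl⟩ : ∃ h, w = v + h := ⟨w - v, by abel⟩
  rw [add_sub_cancel_left, inner_gradient_left]
  set c := L * R ^ 2 / (2 * Real.sqrt m) * ‖h‖ ^ 2
  set φ : Fin n → ℝ → ℝ := fun i β => Phi a σ (v + β • h) (x i)
  have hφ : ∀ i, DifferentiableAt ℝ (φ i) 0 := fun i => by
    simp only [φ, Phi]
    fun_prop
  have hline : HasDerivAt (fun β : ℝ => v + β • h) h 0 := by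
    simpa using ((hasDerivAt_id (0 : ℝ)).smul_const h).const_add v
  have hderiv₁ : HasDerivAt (fun β : ℝ => empLoss a σ f x y (v + β • h))
      (fderiv ℝ (empLoss a σ f x y) v h) 0 := by
    simpa [Function.comp_def] using
      ((differentiable_empLoss hσ hfd) v).hasFDerivAt.comp_hasDerivAt_of_eq 0 hline (by simp)
  have hderiv₂ : HasDerivAt (fun β : ℝ => empLoss a σ f x y (v + β • h))
      (1 / (n : ℝ) * ∑ i, deriv f (y i * Phi a σ v (x i)) * (y i * deriv (φ i) 0)) 0 := by
    refine (HasDerivAt.fun_sum fun i _ => ?_).const_mul _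
    simpa [φ, Function.comp_def] using
      (hfd _).hasDerivAt.comp (0 : ℝ) ((hφ i).hasDerivAt.const_mul (y i))
  have hL : 0 ≤ L := (abs_nonneg _).trans (hσ'' 0)
  have hsample : ∀ i, deriv f (y i * Phi a σ v (x i)) * (y i * deriv (φ i) 0) ≤
      f (y i * Phi a σ (v + h) (x i)) - f (y i * Phi a σ v (x i))
        + c * f (y i * Phi a σ v (x i)) := by
    intro i
    refine (hfc.deriv_mul_le_of_abs_deriv_le_self hfd hfself _
      (y i * Phi a σ (v + h) (x i)) _).trans ?_
    rw [mul_comm c]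
    gcongr
    · exact (abs_nonneg _).trans (hfself _)
    calc |y i * Phi a σ (v + h) (x i) - y i * Phi a σ v (x i) - y i * deriv (φ i) 0|
        = |y i| * |Phi a σ (v + h) (x i) - Phi a σ v (x i) - deriv (φ i) 0| := by
          rw [← abs_mul]; ring_nf
      _ ≤ 1 * (L * ‖x i‖ ^ 2 / (2 * Real.sqrt m) * ‖h‖ ^ 2) :=
          mul_le_mul (hy i) (abs_Phi_add_sub_sub_deriv_le ha hσ hσ' hσ'' v h (x i))
            (abs_nonneg _) zero_le_one
      _ ≤ L * R ^ 2 / (2 * Real.sqrt m) * ‖h‖ ^ 2 := by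
          rw [one_mul]
          gcongr
          exact hx i
  rw [hderiv₁.unique hderiv₂]
  calc _ ≤ 1 / (n : ℝ) * ∑ i, (f (y i * Phi a σ (v + h) (x i)) - f (y i * Phi a σ v (x i))
          + c * f (y i * Phi a σ v (x i))) := by gcongr with i; exact hsample i
    _ = _ := by
        rw [empLoss, empLoss, sum_add_distrib, sum_sub_distrib, ← mul_sum]
        ring

end Loss

section GradientDescent

variable {E : Type*} [NormedAddCommGroup E] [InnerProductSpace ℝ E] {F : E → ℝ} {η ε : ℝ}

lemma le_add_sub_div_of_gradient_step (hη : 0 < η) {u u' g w : E} (hu' : u' = u - η • g)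
    (hdesc : F u' ≤ F u - η / 2 * ‖g‖ ^ 2) (hweak : inner ℝ g (w - u) ≤ F w - F u + ε) :
    F u' ≤ F w + ε + (‖u - w‖ ^ 2 - ‖u' - w‖ ^ 2) / (2 * η) := by
  have hdist : ‖u - w‖ ^ 2 - ‖u' - w‖ ^ 2 = 2 * η * inner ℝ g (u - w) - η ^ 2 * ‖g‖ ^ 2 := by
    rw [hu', show u - η • g - w = (u - w) - η • g by abel, norm_sub_sq_real (u - w),
      real_inner_smul_right, norm_smul, Real.norm_eq_abs, mul_pow, sq_abs, real_inner_comm]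
    ring
  have hflip : inner ℝ g (u - w) = -inner ℝ g (w - u) := by
    rw [← inner_neg_right, neg_sub]
  rw [hdist, hflip, show ∀ p q : ℝ, (2 * η * p - η ^ 2 * q) / (2 * η) = p - η / 2 * q by
    intro p q; field_simp]
  linarith

theorem sum_Icc_le_of_gradient_descent (hη : 0 < η) {W g : ℕ → E} {ε : ℕ → ℝ} {w : E}
    (hrec : ∀ t, W (t + 1) = W t - η • g t)
    (hdesc : ∀ t, F (W (t + 1)) ≤ F (W t) - η / 2 * ‖g t‖ ^ 2)
    (hweak : ∀ t, inner ℝ (g t) (w - W t) ≤ F w - F (W t) + ε t) (T : ℕ) :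
    ∑ t ∈ Icc 1 T, F (W t) ≤ T * F w + ‖W 0 - w‖ ^ 2 / (2 * η) + ∑ t ∈ range T, ε t := by
  calc ∑ t ∈ Icc 1 T, F (W t) = ∑ t ∈ range T, F (W (t + 1)) := by
        rw [← Finset.Ico_add_one_right_eq_Icc, sum_Ico_eq_sum_range, Nat.add_sub_cancel]
        simp only [add_comm 1]
    _ ≤ ∑ t ∈ range T, (F w + ε t + (‖W t - w‖ ^ 2 - ‖W (t + 1) - w‖ ^ 2) / (2 * η)) :=
        sum_le_sum fun t _ =>
          le_add_sub_div_of_gradient_step hη (hrec t) (hdesc t) (hweak t)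
    _ = T * F w + ∑ t ∈ range T, ε t + (‖W 0 - w‖ ^ 2 - ‖W T - w‖ ^ 2) / (2 * η) := by
        rw [sum_add_distrib, sum_add_distrib, ← sum_div,
          sum_range_sub' (fun t => ‖W t - w‖ ^ 2), sum_const, card_range, nsmul_eq_mul]
    _ ≤ _ := by
        have : 0 ≤ ‖W T - w‖ ^ 2 / (2 * η) := by positivity
        rw [sub_div]
        linarith

end GradientDescent

theorem train_loss_regret_general_general
    {m d n : ℕ} (L R η : ℝ)
    (a : Fin m → ℝ) (ha : ∀ j, a j = 1 ∨ a j = -1)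
    (σ : ℝ → ℝ) (hσ : ContDiff ℝ 2 σ)
    (hσ'' : ∀ u, |deriv (deriv σ) u| ≤ L)
    (f : ℝ → ℝ) (hf : ContDiff ℝ 2 f) (hfconv : ConvexOn ℝ Set.univ f)
    (hfself : ∀ u, |deriv f u| ≤ f u)
    (x : Fin n → EuclideanSpace ℝ (Fin d)) (y : Fin n → ℝ)
    (hx : ∀ i, ‖x i‖ ≤ R) (hy : ∀ i, y i = 1 ∨ y i = -1)
    (hη : 0 < η)
    (w₀ : EuclideanSpace ℝ (Fin m × Fin d))
    (W : ℕ → EuclideanSpace ℝ (Fin m × Fin d)) (hW0 : W 0 = w₀)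
    (hWrec : ∀ t : ℕ, W (t + 1) = W t - η • gradient (empLoss a σ f x y) (W t))
    (hdescent : ∀ t : ℕ,
      empLoss a σ f x y (W (t + 1))
        ≤ empLoss a σ f x y (W t) - (η / 2) * ‖gradient (empLoss a σ f x y) (W t)‖ ^ 2)
    (w : EuclideanSpace ℝ (Fin m × Fin d)) (T : ℕ) :
    (1 / (T : ℝ)) * ∑ t ∈ Finset.Icc 1 T, empLoss a σ f x y (W t)
      ≤ empLoss a σ f x y w + ‖w - w₀‖ ^ 2 / (η * T)
        + (L * R ^ 2 / (2 * Real.sqrt m)) * ((1 / (T : ℝ)) *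
            ∑ t ∈ Finset.range T,
              (⨆ α : Set.Icc (0 : ℝ) 1,
                  empLoss a σ f x y ((α : ℝ) • W t + (1 - (α : ℝ)) • w))
                * ‖w - W t‖ ^ 2) := by
  set F := empLoss a σ f x y
  set c := L * R ^ 2 / (2 * Real.sqrt m)
  set S : ℕ → ℝ := fun t => ⨆ α : Set.Icc (0 : ℝ) 1, F ((α : ℝ) • W t + (1 - (α : ℝ)) • w)
  have hσd : Differentiable ℝ σ := hσ.differentiable two_ne_zero
  have hσ'd : Differentiable ℝ (deriv σ) := hσ.differentiable_deriv_two
  have hfd : Differentiable ℝ f := hf.differentiable two_ne_zero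
  have ha' : ∀ j, |a j| ≤ 1 := fun j => by rcases ha j with h | h <;> simp [h]
  have hy' : ∀ i, |y i| ≤ 1 := fun i => by rcases hy i with h | h <;> simp [h]
  have hF : Continuous F := (differentiable_empLoss hσd hfd).continuous
  have hweak : ∀ t, inner ℝ (gradient F (W t)) (w - W t)
      ≤ F w - F (W t) + c * (S t * ‖w - W t‖ ^ 2) := by
    intro t
    have hL : 0 ≤ L := (abs_nonneg _).trans (hσ'' 0)
    have hS := mul_le_mul_of_nonneg_left (le_iSup_segment hF (W t) w)
      (by positivity : 0 ≤ c * ‖w - W t‖ ^ 2)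
    have := inner_gradient_empLoss_le ha' hσd hσ'd hσ'' hfconv hfd hfself hx hy' (W t) w
    linarith
  have hsum := sum_Icc_le_of_gradient_descent hη hWrec hdescent hweak T
  rw [← mul_sum, hW0, norm_sub_rev] at hsum
  have hFw : 0 ≤ F w := empLoss_nonneg (fun u => (abs_nonneg _).trans (hfself u)) w
  set penalty := ∑ t ∈ range T, S t * ‖w - W t‖ ^ 2
  calc 1 / (T : ℝ) * ∑ t ∈ Icc 1 T, F (W t)
      ≤ 1 / T * (T * F w + ‖w - w₀‖ ^ 2 / (2 * η) + c * penalty) := by gcongr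
    _ = T / T * F w + ‖w - w₀‖ ^ 2 / (η * T) / 2 + c * (1 / T * penalty) := by ring
    _ ≤ F w + ‖w - w₀‖ ^ 2 / (η * T) + c * (1 / T * penalty) := by
        have : 0 ≤ ‖w - w₀‖ ^ 2 / (η * T) := by positivity
        nlinarith [div_self_le_one (T : ℝ)]

/-- regret bound for GD under the descent condition, with the
self-bounded weak-convexity correction term. -/
theorem train_loss_regret_general
    {m d n : ℕ} (ℓ L R η : ℝ)
    (a : Fin m → ℝ) (ha : ∀ j, a j = 1 ∨ a j = -1)
    (σ : ℝ → ℝ) (hσ : ContDiff ℝ 2 σ)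
    (hσ' : ∀ u, |deriv σ u| ≤ ℓ) (hσ'' : ∀ u, |deriv (deriv σ) u| ≤ L)
    (f : ℝ → ℝ) (hf : ContDiff ℝ 2 f) (hfconv : ConvexOn ℝ Set.univ f)
    (hfnonneg : ∀ u, 0 ≤ f u) (hfself : ∀ u, |deriv f u| ≤ f u)
    (x : Fin n → EuclideanSpace ℝ (Fin d)) (y : Fin n → ℝ)
    (hx : ∀ i, ‖x i‖ ≤ R) (hy : ∀ i, y i = 1 ∨ y i = -1)
    (hη : 0 < η)
    (w₀ : EuclideanSpace ℝ (Fin m × Fin d))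
    (W : ℕ → EuclideanSpace ℝ (Fin m × Fin d)) (hW0 : W 0 = w₀)
    (hWrec : ∀ t : ℕ, W (t + 1) = W t - η • gradient (empLoss a σ f x y) (W t))
    (hdescent : ∀ t : ℕ,
      empLoss a σ f x y (W (t + 1))
        ≤ empLoss a σ f x y (W t) - (η / 2) * ‖gradient (empLoss a σ f x y) (W t)‖ ^ 2)
    (w : EuclideanSpace ℝ (Fin m × Fin d)) (T : ℕ) (hT : 1 ≤ T) :
    (1 / (T : ℝ)) * ∑ t ∈ Finset.Icc 1 T, empLoss a σ f x y (W t)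
      ≤ empLoss a σ f x y w + ‖w - w₀‖ ^ 2 / (η * T)
        + (L * R ^ 2 / (2 * Real.sqrt m)) * ((1 / (T : ℝ)) *
            ∑ t ∈ Finset.range T,
              (⨆ α : Set.Icc (0 : ℝ) 1,
                  empLoss a σ f x y ((α : ℝ) • W t + (1 - (α : ℝ)) • w))
                * ‖w - W t‖ ^ 2) :=
  train_loss_regret_general_general L R η a ha σ hσ hσ'' f hf hfconv hfself x y hx hy hη w₀ W hW0
    hWrec hdescent w T
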